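/- arXiv:2011.12796 — 2 statements merged into one kernel-verified Lean document; each statement's English description precedes it below -/
import Mathlib

section
/- (Modified discrete Gronwall lemma.) Let 1 < p ≤ 2, T > 0. For M ∈ ℕ and h > 0, with κ := T/M, let nonnegative sequences a_m, b_m (m=0,…,M) and r_m, s_m, ρ_m, σ_m (m=1,…,M) be given. Assume there are μ₀, κ̂ > 0 such that for all 0 < h < 1/√μ₀ and 0 < κ < κ̂: a₀² ≤ μ₀h², b₀² ≤ μ₀h², κ∑ r_m² ≤ μ₀h², κ∑ s_m² ≤ μ₀h², κ∑ ρ_m² ≤ μ₀κ², κ∑ σ_m² ≤ μ₀κ². Further suppose there are μ₁, μ₂, μ₃ > 0, Λ > 0, θ ∈ (0,1], and λ ∈ [0,Λ] such that for all m: (a_m² − a_{m-1}²)/κ + μ₁(λ+b_m)^{p-2} b_m² ≤ b_m r_m + b_m ρ_m + μ₂ b_{m-1} b_m + s_m² + σ_m², and also (a_m² − a_{m-1}²)/κ + μ₁(λ+b_m)^{p-2} b_m² ≤ b_m r_m + b_m ρ_m + μ₃ b_m b_{m-1}^{1-θ} a_{m-1}^θ + s_m² + σ_m². Then there exist constants μ̄₀,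 κ̄, μ₄, μ₅ > 0 independent of λ such that for all κ < κ̄ and h² < μ̄₀ κ: max_{0≤m≤M} b_m ≤ 1 and max_{0≤m≤M} a_m² + μ₁(1+Λ)^{p-2} κ∑_{m=0}^M b_m² ≤ μ₄(h²+κ²)·exp(2μ₅κM). -/
open scoped BigOperators

lemma aux_young (x y ε : ℝ) (hε : 0 < ε) : x * y ≤ ε * x ^ 2 + y ^ 2 / (4 * ε) := by
  rw [← sub_nonneg]
  have h1 : ε * x ^ 2 + y ^ 2 / (4 * ε) - x * y = (2 * ε * x - y) ^ 2 / (4 * ε) := by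
    field_simp; ring
  rw [h1]
  positivity

lemma aux_theta (θ t x y : ℝ) (hθ : 0 < θ) (hθ1 : θ ≤ 1) (ht : 0 < t) (hx : 0 ≤ x) (hy : 0 ≤ y) :
    (x ^ (1 - θ) * y ^ θ) ^ 2 ≤ t * x ^ 2 + t ^ (-(1 - θ) / θ) * y ^ 2 := by
  have h1θ : 0 ≤ 1 - θ := by linarith
  have key := Real.geom_mean_le_arith_mean2_weighted (w₁ := 1-θ) (w₂ := θ) (p₁ := t*x^2)
    (p₂ := t ^ (-(1 - θ) / θ) * y ^ 2) h1θ hθ.le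
    (mul_nonneg ht.le (sq_nonneg x)) (mul_nonneg (Real.rpow_pos_of_pos ht _).le (sq_nonneg y))
    (by ring)
  have e1 : (t * x ^ 2) ^ (1 - θ) * (t ^ (-(1 - θ) / θ) * y ^ 2) ^ θ
      = (x ^ (1 - θ) * y ^ θ) ^ 2 := by
    rw [Real.mul_rpow ht.le (sq_nonneg x), Real.mul_rpow (Real.rpow_pos_of_pos ht _).le (sq_nonneg y),
      ← Real.rpow_natCast x 2, ← Real.rpow_natCast y 2,
      ← Real.rpow_mul hx, ← Real.rpow_mul hy, ← Real.rpow_mul ht.le]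
    rw [mul_pow, ← Real.rpow_natCast (x ^ (1-θ)) 2, ← Real.rpow_natCast (y ^ θ) 2,
      ← Real.rpow_mul hx, ← Real.rpow_mul hy]
    have : -(1 - θ) / θ * θ = -(1 - θ) := by field_simp
    rw [this, mul_comm ((2:ℕ):ℝ) (1 - θ), mul_comm ((2:ℕ):ℝ) θ]
    have e2 : t ^ (1 - θ) * t ^ (-(1 - θ)) = 1 := by
      rw [← Real.rpow_add ht]; norm_num
    linear_combination (x ^ ((1 - θ) * ((2:ℕ):ℝ)) * y ^ (θ * ((2:ℕ):ℝ))) * e2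
  calc (x ^ (1 - θ) * y ^ θ) ^ 2 = (t * x ^ 2) ^ (1 - θ) * (t ^ (-(1 - θ) / θ) * y ^ 2) ^ θ := e1.symm
    _ ≤ (1 - θ) * (t * x ^ 2) + θ * (t ^ (-(1 - θ) / θ) * y ^ 2) := key
    _ ≤ t * x ^ 2 + t ^ (-(1 - θ) / θ) * y ^ 2 := by
        have h2 : 0 ≤ t * x ^ 2 := mul_nonneg ht.le (sq_nonneg x)
        have h3 : 0 ≤ t ^ (-(1 - θ) / θ) * y ^ 2 :=
          mul_nonneg (Real.rpow_pos_of_pos ht _).le (sq_nonneg y)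
        nlinarith
set_option maxHeartbeats 4000000

/-- Modified discrete Gronwall lemma. For each mesh size `h > 0` and each `M ∈ ℕ`
    (with time step `κ = T/M`) nonnegative sequences `a, b, r, s, ρ, σ` are given.
    Under the smallness assumptions on the data and the two recursive inequalities
    (which hold for some `λ ∈ [0,Λ]`), there are constants `μ̄₀, κ̄, μ₄, μ₅ > 0`
    independent of `λ` such that for all `κ < κ̄` and `h² < μ̄₀ κ` one has
    `max b_m ≤ 1` and the Gronwall-type estimate. -/
theorem stmt_12 (p T : ℝ) (hp : 1 < p) (hp2 : p ≤ 2) (hT : 0 < T)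
    (a b r s ρ σ : ℝ → ℕ → ℕ → ℝ)
    (ha : ∀ h M m, 0 ≤ a h M m) (hb : ∀ h M m, 0 ≤ b h M m)
    (hr : ∀ h M m, 0 ≤ r h M m) (hs : ∀ h M m, 0 ≤ s h M m)
    (hρ : ∀ h M m, 0 ≤ ρ h M m) (hσ : ∀ h M m, 0 ≤ σ h M m)
    (μ₀ κhat : ℝ) (hμ₀ : 0 < μ₀) (hκhat : 0 < κhat)
    (hdata : ∀ (h : ℝ) (M : ℕ), 0 < h → h < 1 / Real.sqrt μ₀ →
      0 < (M : ℕ) → 0 < T / M → T / M < κhat →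
      (a h M 0) ^ 2 ≤ μ₀ * h ^ 2 ∧ (b h M 0) ^ 2 ≤ μ₀ * h ^ 2 ∧
      (T / M) * ∑ m ∈ Finset.Icc 1 M, (r h M m) ^ 2 ≤ μ₀ * h ^ 2 ∧
      (T / M) * ∑ m ∈ Finset.Icc 1 M, (s h M m) ^ 2 ≤ μ₀ * h ^ 2 ∧
      (T / M) * ∑ m ∈ Finset.Icc 1 M, (ρ h M m) ^ 2 ≤ μ₀ * (T / M) ^ 2 ∧
      (T / M) * ∑ m ∈ Finset.Icc 1 M, (σ h M m) ^ 2 ≤ μ₀ * (T / M) ^ 2)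
    (μ₁ μ₂ μ₃ Λ θ : ℝ) (hμ₁ : 0 < μ₁) (hμ₂ : 0 < μ₂) (hμ₃ : 0 < μ₃)
    (hΛ : 0 < Λ) (hθ : 0 < θ) (hθ1 : θ ≤ 1) :
    ∃ μ₀bar κbar μ₄ μ₅ : ℝ, 0 < μ₀bar ∧ 0 < κbar ∧ 0 < μ₄ ∧ 0 < μ₅ ∧
      ∀ lam : ℝ, 0 ≤ lam → lam ≤ Λ →
        (∀ (h : ℝ) (M : ℕ) (m : ℕ), 0 < h → h < 1 / Real.sqrt μ₀ →
          0 < M → T / M < κhat → 1 ≤ m → m ≤ M →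
          ((a h M m) ^ 2 - (a h M (m - 1)) ^ 2) / (T / M) +
              μ₁ * (lam + b h M m) ^ (p - 2) * (b h M m) ^ 2 ≤
            b h M m * r h M m + b h M m * ρ h M m +
              μ₂ * b h M (m - 1) * b h M m + (s h M m) ^ 2 + (σ h M m) ^ 2) →
        (∀ (h : ℝ) (M : ℕ) (m : ℕ), 0 < h → h < 1 / Real.sqrt μ₀ →
          0 < M → T / M < κhat → 1 ≤ m → m ≤ M →
          ((a h M m) ^ 2 - (a h M (m - 1)) ^ 2) / (T / M) +
              μ₁ * (lam + b h M m) ^ (p - 2) * (b h M m) ^ 2 ≤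
            b h M m * r h M m + b h M m * ρ h M m +
              μ₃ * b h M m * (b h M (m - 1)) ^ (1 - θ) * (a h M (m - 1)) ^ θ +
              (s h M m) ^ 2 + (σ h M m) ^ 2) →
        ∀ (h : ℝ) (M : ℕ), 0 < h → 0 < M → T / M < κbar → h ^ 2 < μ₀bar * (T / M) →
          (∀ m ≤ M, b h M m ≤ 1) ∧
          ∀ m ≤ M,
            (a h M m) ^ 2 +
                μ₁ * (1 + Λ) ^ (p - 2) * ((T / M) * ∑ k ∈ Finset.range (M + 1), (b h M k) ^ 2) ≤
              μ₄ * (h ^ 2 + (T / M) ^ 2) * Real.exp (2 * μ₅ * (T / M) * M) := by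
  have hΛ1 : (0:ℝ) < 1 + Λ := by linarith
  set c := μ₁ * (1 + Λ) ^ (p - 2) with hc_def
  have hc : 0 < c := mul_pos hμ₁ (Real.rpow_pos_of_pos hΛ1 _)
  set t₀ := c ^ 2 / (32 * μ₃ ^ 2) with ht₀_def
  have ht₀ : 0 < t₀ := by rw [ht₀_def]; positivity
  set K := 2 * μ₃ ^ 2 / c * t₀ ^ (-(1 - θ) / θ) with hK_def
  have hK : 0 < K := mul_pos (by positivity) (Real.rpow_pos_of_pos ht₀ _)
  set C₁ := μ₀ * (2 + c / 16 + 2 / c) with hC₁_def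
  have hC₁ : 0 < C₁ := by
    have : 0 < 2 + c / 16 + 2 / c := by positivity
    exact mul_pos hμ₀ this
  set γ := min (c / (8 * μ₃)) 1 with hγ_def
  have hγ : 0 < γ := lt_min (by positivity) one_pos
  have hγ1 : γ ≤ 1 := min_le_right _ _
  set β := γ ^ (2 / θ) with hβ_def
  have hβ : 0 < β := Real.rpow_pos_of_pos hγ _
  set X := Real.exp (K * T) * C₁ with hX_def
  have hX : 0 < X := mul_pos (Real.exp_pos _) hC₁
  set η := min 1 (min κhat (min (1 / (2 * μ₀)) (min ((c / 8) ^ 2 / μ₀)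
      (min (c / (8 * μ₀)) (min (c / 8 / (2 * X)) (β / (2 * X))))))) with hη_def
  have hη : 0 < η :=
    lt_min one_pos (lt_min hκhat (lt_min (by positivity) (lt_min (by positivity)
      (lt_min (by positivity) (lt_min (by positivity) (by positivity))))))
  have hη1 : η ≤ 1 := min_le_left _ _
  have hηκhat : η ≤ κhat := le_trans (min_le_right _ _) (min_le_left _ _)
  have hη2μ₀ : η ≤ 1 / (2 * μ₀) :=
    le_trans (min_le_right _ _) (le_trans (min_le_right _ _) (min_le_left _ _))
  have hηc8sq : η ≤ (c / 8) ^ 2 / μ₀ :=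
    le_trans (min_le_right _ _) (le_trans (min_le_right _ _)
      (le_trans (min_le_right _ _) (min_le_left _ _)))
  have hηc8 : η ≤ c / (8 * μ₀) :=
    le_trans (min_le_right _ _) (le_trans (min_le_right _ _)
      (le_trans (min_le_right _ _) (le_trans (min_le_right _ _) (min_le_left _ _))))
  have hηX1 : η ≤ c / 8 / (2 * X) :=
    le_trans (min_le_right _ _) (le_trans (min_le_right _ _)
      (le_trans (min_le_right _ _) (le_trans (min_le_right _ _)
        (le_trans (min_le_right _ _) (min_le_left _ _)))))
  have hηX2 : η ≤ β / (2 * X) :=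
    le_trans (min_le_right _ _) (le_trans (min_le_right _ _)
      (le_trans (min_le_right _ _) (le_trans (min_le_right _ _)
        (le_trans (min_le_right _ _) (min_le_right _ _)))))
  -- derived constant facts
  have hμ₀η1 : μ₀ * η ≤ (c / 8) ^ 2 := by
    have := mul_le_mul_of_nonneg_left hηc8sq hμ₀.le
    calc μ₀ * η ≤ μ₀ * ((c / 8) ^ 2 / μ₀) := this
      _ = (c / 8) ^ 2 := by field_simp
  have hμ₀η2 : μ₀ * η ≤ c / 8 := by
    have := mul_le_mul_of_nonneg_left hηc8 hμ₀.le
    calc μ₀ * η ≤ μ₀ * (c / (8 * μ₀)) := this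
      _ = c / 8 := by field_simp
  have hμ₀η3 : μ₀ * η ≤ 1 / 2 := by
    have := mul_le_mul_of_nonneg_left hη2μ₀ hμ₀.le
    calc μ₀ * η ≤ μ₀ * (1 / (2 * μ₀)) := this
      _ = 1 / 2 := by field_simp
  clear_value c t₀ K C₁ γ β X η
  have hXη1 : 2 * X * η ≤ c / 8 := by
    have h2X : (0:ℝ) < 2 * X := by linarith
    have := (le_div_iff₀ h2X).mp hηX1
    linarith [this]
  have hXη2 : 2 * X * η ≤ β := by
    have h2X : (0:ℝ) < 2 * X := by linarith
    have := (le_div_iff₀ h2X).mp hηX2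
    linarith [this]
  refine ⟨η, η, 3 * X + c * μ₀, 1, hη, hη, by nlinarith [mul_pos hc hμ₀], one_pos, ?_⟩
  intro lam hlam0 hlamΛ H1 H2 h M hh hM hκη hhη
  clear H1
  set κ := T / (M:ℝ) with hκ_def
  have hMR : (0:ℝ) < M := Nat.cast_pos.mpr hM
  have hκ : 0 < κ := div_pos hT hMR
  have hκM : κ * M = T := div_mul_cancel₀ T (ne_of_gt hMR)
  have hκle1 : κ ≤ 1 := le_trans hκη.le hη1
  have hηκ_le : η * κ ≤ η := by
    calc η * κ ≤ η * 1 := mul_le_mul_of_nonneg_left hκle1 hη.le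
      _ = η := mul_one η
  have hh2 : h ^ 2 < η := lt_of_lt_of_le hhη hηκ_le
  have hsμ : h < 1 / Real.sqrt μ₀ := by
    have hsq : h ^ 2 < (1 / Real.sqrt μ₀) ^ 2 := by
      rw [div_pow, one_pow, Real.sq_sqrt hμ₀.le]
      have h2 : 1 / (2 * μ₀) < 1 / μ₀ := by
        apply div_lt_div_of_pos_left one_pos hμ₀; linarith
      linarith
    exact lt_of_pow_lt_pow_left₀ 2 (by positivity) hsq
  have hκhat' : κ < κhat := lt_of_lt_of_le hκη hηκhat
  obtain ⟨da, db, dr, ds, dρ, dσ⟩ := hdata h M hh hsμ hM hκ hκhat'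
  have H2' : ∀ m, 1 ≤ m → m ≤ M →
      (a h M m ^ 2 - a h M (m - 1) ^ 2) / κ +
          μ₁ * (lam + b h M m) ^ (p - 2) * b h M m ^ 2 ≤
        b h M m * r h M m + b h M m * ρ h M m +
          μ₃ * b h M m * b h M (m - 1) ^ (1 - θ) * a h M (m - 1) ^ θ +
          s h M m ^ 2 + σ h M m ^ 2 :=
    fun m h1 h2 => H2 h M m hh hsμ hM hκhat' h1 h2
  clear H2 hdata
  rw [← hκ_def] at dr ds dρ dσ
  clear_value κ
  -- pointwise data bounds
  have hμ₀hκ : μ₀ * h ^ 2 < μ₀ * η * κ := by linarith [mul_lt_mul_of_pos_left hhη hμ₀]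
  have hrb : ∀ m ∈ Finset.Icc 1 M, r h M m ≤ c / 8 := by
    intro m hm
    have e1 : r h M m ^ 2 ≤ ∑ j ∈ Finset.Icc 1 M, r h M j ^ 2 :=
      Finset.single_le_sum (f := fun j => r h M j ^ 2) (fun j _ => sq_nonneg _) hm
    have e2 : κ * r h M m ^ 2 ≤ μ₀ * h ^ 2 :=
      le_trans (mul_le_mul_of_nonneg_left e1 hκ.le) dr
    have e4 : κ * r h M m ^ 2 ≤ κ * (c / 8) ^ 2 := by
      linarith [mul_le_mul_of_nonneg_right hμ₀η1 hκ.le]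
    have e3 : r h M m ^ 2 ≤ (c / 8) ^ 2 := le_of_mul_le_mul_left e4 hκ
    exact le_of_pow_le_pow_left₀ two_ne_zero (by positivity) e3
  have hρb : ∀ m ∈ Finset.Icc 1 M, ρ h M m ≤ c / 8 := by
    intro m hm
    have e1 : ρ h M m ^ 2 ≤ ∑ j ∈ Finset.Icc 1 M, ρ h M j ^ 2 :=
      Finset.single_le_sum (f := fun j => ρ h M j ^ 2) (fun j _ => sq_nonneg _) hm
    have e2 : κ * ρ h M m ^ 2 ≤ μ₀ * κ ^ 2 :=
      le_trans (mul_le_mul_of_nonneg_left e1 hκ.le) dρ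
    have e4 : κ * ρ h M m ^ 2 ≤ κ * (c / 8) ^ 2 := by
      linarith [mul_le_mul_of_nonneg_right hμ₀η1 hκ.le,
        mul_le_mul_of_nonneg_right (mul_lt_mul_of_pos_left hκη hμ₀).le hκ.le]
    have e3 : ρ h M m ^ 2 ≤ (c / 8) ^ 2 := le_of_mul_le_mul_left e4 hκ
    exact le_of_pow_le_pow_left₀ two_ne_zero (by positivity) e3
  have hsb : ∀ m ∈ Finset.Icc 1 M, s h M m ^ 2 ≤ c / 8 := by
    intro m hm
    have e1 : s h M m ^ 2 ≤ ∑ j ∈ Finset.Icc 1 M, s h M j ^ 2 :=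
      Finset.single_le_sum (f := fun j => s h M j ^ 2) (fun j _ => sq_nonneg _) hm
    have e2 : κ * s h M m ^ 2 ≤ μ₀ * h ^ 2 :=
      le_trans (mul_le_mul_of_nonneg_left e1 hκ.le) ds
    have e4 : κ * s h M m ^ 2 ≤ κ * (c / 8) := by
      linarith [mul_le_mul_of_nonneg_right hμ₀η2 hκ.le]
    exact le_of_mul_le_mul_left e4 hκ
  have hσb : ∀ m ∈ Finset.Icc 1 M, σ h M m ^ 2 ≤ c / 8 := by
    intro m hm
    have e1 : σ h M m ^ 2 ≤ ∑ j ∈ Finset.Icc 1 M, σ h M j ^ 2 :=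
      Finset.single_le_sum (f := fun j => σ h M j ^ 2) (fun j _ => sq_nonneg _) hm
    have e2 : κ * σ h M m ^ 2 ≤ μ₀ * κ ^ 2 :=
      le_trans (mul_le_mul_of_nonneg_left e1 hκ.le) dσ
    have e4 : κ * σ h M m ^ 2 ≤ κ * (c / 8) := by
      linarith [mul_le_mul_of_nonneg_right hμ₀η2 hκ.le,
        mul_le_mul_of_nonneg_right (mul_lt_mul_of_pos_left hκη hμ₀).le hκ.le]
    exact le_of_mul_le_mul_left e4 hκ
  -- the quantities
  set d : ℕ → ℝ := fun j => 2 / c * (r h M j ^ 2 + ρ h M j ^ 2) + s h M j ^ 2 + σ h M j ^ 2 with hd_def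
  set Φ : ℕ → ℝ := fun n => a h M n ^ 2 + c / 2 * κ * ∑ j ∈ Finset.Icc 1 n, b h M j ^ 2
      + c / 16 * κ * b h M n ^ 2 with hΦ_def
  set G : ℕ → ℝ := fun n => (1 + K * κ) ^ n * (Φ 0 + ∑ j ∈ Finset.Icc 1 n, κ * d j) with hG_def
  clear_value d Φ G
  have h2c : (0:ℝ) ≤ 2 / c := div_nonneg (by norm_num) hc.le
  have hd0 : ∀ j, 0 ≤ d j := by
    intro j; rw [hd_def]
    exact add_nonneg (add_nonneg (mul_nonneg h2c (add_nonneg (sq_nonneg _) (sq_nonneg _)))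
      (sq_nonneg _)) (sq_nonneg _)
  have hΦA : ∀ n, a h M n ^ 2 ≤ Φ n := by
    intro n; rw [hΦ_def]; dsimp only
    have h1 : 0 ≤ c / 2 * κ * ∑ j ∈ Finset.Icc 1 n, b h M j ^ 2 :=
      mul_nonneg (mul_nonneg (by linarith only [hc]) hκ.le) (Finset.sum_nonneg fun j _ => sq_nonneg _)
    have h2 : 0 ≤ c / 16 * κ * b h M n ^ 2 :=
      mul_nonneg (mul_nonneg (by linarith only [hc]) hκ.le) (sq_nonneg _)
    linarith only [h1, h2]
  have hΦS : ∀ n, c / 2 * κ * ∑ j ∈ Finset.Icc 1 n, b h M j ^ 2 ≤ Φ n := by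
    intro n; rw [hΦ_def]; dsimp only
    have h2 : 0 ≤ c / 16 * κ * b h M n ^ 2 :=
      mul_nonneg (mul_nonneg (by linarith only [hc]) hκ.le) (sq_nonneg _)
    linarith only [h2, sq_nonneg (a h M n)]
  have hΦ0 : ∀ n, 0 ≤ Φ n := fun n => le_trans (sq_nonneg _) (hΦA n)
  have hΦ0v : Φ 0 = a h M 0 ^ 2 + c / 16 * κ * b h M 0 ^ 2 := by
    rw [hΦ_def]; dsimp only
    rw [show Finset.Icc 1 0 = (∅ : Finset ℕ) from rfl]
    simp
  have hD : Φ 0 + ∑ j ∈ Finset.Icc 1 M, κ * d j ≤ C₁ * (h ^ 2 + κ ^ 2) := by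
    have hsum : ∑ j ∈ Finset.Icc 1 M, κ * d j
        = 2 / c * (κ * ∑ j ∈ Finset.Icc 1 M, r h M j ^ 2)
          + 2 / c * (κ * ∑ j ∈ Finset.Icc 1 M, ρ h M j ^ 2)
          + κ * ∑ j ∈ Finset.Icc 1 M, s h M j ^ 2
          + κ * ∑ j ∈ Finset.Icc 1 M, σ h M j ^ 2 := by
      calc ∑ j ∈ Finset.Icc 1 M, κ * d j
          = ∑ j ∈ Finset.Icc 1 M, (2 / c * (κ * r h M j ^ 2) + (2 / c * (κ * ρ h M j ^ 2)
              + (κ * s h M j ^ 2 + κ * σ h M j ^ 2))) :=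
            Finset.sum_congr rfl fun j _ => by rw [hd_def]; ring
        _ = _ := by
            simp only [Finset.sum_add_distrib, ← Finset.mul_sum]
            ring
    rw [hsum, hΦ0v, hC₁_def]
    have k1 : 2 / c * (κ * ∑ j ∈ Finset.Icc 1 M, r h M j ^ 2) ≤ 2 / c * (μ₀ * h ^ 2) :=
      mul_le_mul_of_nonneg_left dr h2c
    have k2 : 2 / c * (κ * ∑ j ∈ Finset.Icc 1 M, ρ h M j ^ 2) ≤ 2 / c * (μ₀ * κ ^ 2) :=
      mul_le_mul_of_nonneg_left dρ h2c
    have k5 : κ * b h M 0 ^ 2 ≤ μ₀ * h ^ 2 := by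
      calc κ * b h M 0 ^ 2 ≤ 1 * (μ₀ * h ^ 2) := mul_le_mul hκle1 db (sq_nonneg _) zero_le_one
        _ = μ₀ * h ^ 2 := one_mul _
    have k6 : c / 16 * (κ * b h M 0 ^ 2) ≤ c / 16 * (μ₀ * h ^ 2) :=
      mul_le_mul_of_nonneg_left k5 (by linarith only [hc])
    have p1 : 0 ≤ c / 16 * (μ₀ * κ ^ 2) :=
      mul_nonneg (by linarith only [hc]) (mul_nonneg hμ₀.le (sq_nonneg _))
    have p2 : 0 ≤ μ₀ * κ ^ 2 := mul_nonneg hμ₀.le (sq_nonneg _)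
    have p3 : 0 ≤ μ₀ * h ^ 2 := mul_nonneg hμ₀.le (sq_nonneg _)
    linarith only [da, ds, dσ, k1, k2, k6, p1, p2, p3]
  have hGE : ∀ n, n ≤ M → G n ≤ X * (h ^ 2 + κ ^ 2) := by
    intro n hn
    have hKκ0 : (0:ℝ) ≤ K * κ := mul_nonneg hK.le hκ.le
    have hbase : (1:ℝ) ≤ 1 + K * κ := by linarith only [hKκ0]
    have g1 : (1 + K * κ) ^ n ≤ Real.exp (K * T) := by
      calc (1 + K * κ) ^ n ≤ (1 + K * κ) ^ M := pow_le_pow_right₀ hbase hn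
        _ ≤ Real.exp (K * κ) ^ M :=
          pow_le_pow_left₀ (by linarith only [hKκ0]) (by linarith only [Real.add_one_le_exp (K * κ)]) M
        _ = Real.exp (K * T) := by
          rw [← Real.exp_nat_mul]; congr 1; rw [← hκM]; ring
    have g2 : Φ 0 + ∑ j ∈ Finset.Icc 1 n, κ * d j ≤ Φ 0 + ∑ j ∈ Finset.Icc 1 M, κ * d j := by
      apply add_le_add_right
      apply Finset.sum_le_sum_of_subset_of_nonneg (Finset.Icc_subset_Icc_right hn)
      intro j _ _; exact mul_nonneg hκ.le (hd0 j)
    have g0 : 0 ≤ Φ 0 + ∑ j ∈ Finset.Icc 1 n, κ * d j :=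
      add_nonneg (hΦ0 0) (Finset.sum_nonneg fun j _ => mul_nonneg hκ.le (hd0 j))
    calc G n = (1 + K * κ) ^ n * (Φ 0 + ∑ j ∈ Finset.Icc 1 n, κ * d j) := by rw [hG_def]
      _ ≤ Real.exp (K * T) * (C₁ * (h ^ 2 + κ ^ 2)) :=
          mul_le_mul g1 (le_trans g2 hD) g0 (Real.exp_pos _).le
      _ = X * (h ^ 2 + κ ^ 2) := by rw [hX_def]; ring
  have hEκ : X * (h ^ 2 + κ ^ 2) ≤ c / 8 * κ := by
    have e1 : h ^ 2 + κ ^ 2 ≤ 2 * η * κ := by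
      linarith only [hhη, mul_le_mul_of_nonneg_right hκη.le hκ.le]
    calc X * (h ^ 2 + κ ^ 2) ≤ X * (2 * η * κ) := mul_le_mul_of_nonneg_left e1 hX.le
      _ = 2 * X * η * κ := by ring
      _ ≤ c / 8 * κ := mul_le_mul_of_nonneg_right hXη1 hκ.le
  have hEβ : X * (h ^ 2 + κ ^ 2) ≤ β := by
    have e1 : h ^ 2 + κ ^ 2 ≤ 2 * η * κ := by
      linarith only [hhη, mul_le_mul_of_nonneg_right hκη.le hκ.le]
    have hXη0 : 0 ≤ 2 * X * η := mul_nonneg (mul_nonneg (by norm_num) hX.le) hη.le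
    calc X * (h ^ 2 + κ ^ 2) ≤ X * (2 * η * κ) := mul_le_mul_of_nonneg_left e1 hX.le
      _ = 2 * X * η * κ := by ring
      _ ≤ 2 * X * η * 1 := mul_le_mul_of_nonneg_left hκle1 hXη0
      _ = 2 * X * η := mul_one _
      _ ≤ β := hXη2
  -- dissipation lower bounds
  have hγc : γ ≤ c / (8 * μ₃) := by rw [hγ_def]; exact min_le_left _ _
  have hp2' : p - 2 ≤ 0 := by linarith only [hp2]
  have hdiss : ∀ m, b h M m ≤ 1 →
      c * b h M m ^ 2 ≤ μ₁ * (lam + b h M m) ^ (p - 2) * b h M m ^ 2 := by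
    intro m hbm1
    rcases eq_or_lt_of_le (hb h M m) with h0 | h0
    · rw [← h0]; simp
    · have hpos : 0 < lam + b h M m := by linarith only [hlam0, h0]
      have hle : lam + b h M m ≤ 1 + Λ := by linarith only [hlamΛ, hbm1]
      have h1 := Real.rpow_le_rpow_of_nonpos hpos hle hp2'
      rw [hc_def]
      exact mul_le_mul_of_nonneg_right (mul_le_mul_of_nonneg_left h1 hμ₁.le) (sq_nonneg _)
  have hdiss2 : ∀ m, 1 ≤ b h M m →
      c * b h M m ≤ μ₁ * (lam + b h M m) ^ (p - 2) * b h M m ^ 2 := by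
    intro m h1b
    have hbpos : (0:ℝ) < b h M m := lt_of_lt_of_le one_pos h1b
    have hle : lam + b h M m ≤ (1 + Λ) * b h M m := by
      have e1 : Λ * 1 ≤ Λ * b h M m := mul_le_mul_of_nonneg_left h1b hΛ.le
      nlinarith only [hlamΛ, e1, h1b]
    have h2 : ((1 + Λ) * b h M m) ^ (p - 2) ≤ (lam + b h M m) ^ (p - 2) :=
      Real.rpow_le_rpow_of_nonpos (by linarith only [hlam0, hbpos]) hle hp2'
    have h3 : ((1 + Λ) * b h M m) ^ (p - 2) = (1 + Λ) ^ (p - 2) * b h M m ^ (p - 2) :=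
      Real.mul_rpow hΛ1.le hbpos.le
    have h4 : b h M m ^ (p - 2) * b h M m ^ (2:ℕ) = b h M m ^ p := by
      rw [← Real.rpow_natCast (b h M m) 2, ← Real.rpow_add hbpos]
      norm_num
    have h5 : b h M m ≤ b h M m ^ p := by
      calc b h M m = b h M m ^ (1:ℝ) := (Real.rpow_one _).symm
        _ ≤ b h M m ^ p := Real.rpow_le_rpow_of_exponent_le h1b (by linarith only [hp])
    calc c * b h M m ≤ c * b h M m ^ p := mul_le_mul_of_nonneg_left h5 hc.le
      _ = μ₁ * (((1 + Λ) * b h M m) ^ (p - 2) * b h M m ^ (2:ℕ)) := by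
          rw [h3, mul_assoc, h4, hc_def]; ring
      _ ≤ μ₁ * ((lam + b h M m) ^ (p - 2) * b h M m ^ (2:ℕ)) :=
          mul_le_mul_of_nonneg_left (mul_le_mul_of_nonneg_right h2 (sq_nonneg _)) hμ₁.le
      _ = μ₁ * (lam + b h M m) ^ (p - 2) * b h M m ^ 2 := (mul_assoc _ _ _).symm
  -- main induction
  have key : ∀ n, n ≤ M → (∀ k, k ≤ n → b h M k ≤ 1) ∧ (∀ k, k ≤ n → Φ k ≤ G k) := by
    intro n
    induction n with
    | zero =>
      intro _
      have hb0 : b h M 0 ≤ 1 := by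
        have e0 : μ₀ * (η * κ) ≤ μ₀ * η := mul_le_mul_of_nonneg_left hηκ_le hμ₀.le
        have e1 : b h M 0 ^ 2 ≤ 1 ^ 2 := by
          linarith only [db, hμ₀hκ, e0, hμ₀η3]
        exact le_of_pow_le_pow_left₀ two_ne_zero zero_le_one e1
      constructor
      · intro k hk; rw [Nat.le_zero.mp hk]; exact hb0
      · intro k hk; rw [Nat.le_zero.mp hk]
        rw [hG_def]; dsimp only
        rw [show Finset.Icc 1 0 = (∅ : Finset ℕ) from rfl]
        simp
    | succ n ih =>
      intro hn1
      obtain ⟨ihb, ihΦ⟩ := ih (Nat.le_of_succ_le hn1)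
      have hbn : b h M n ≤ 1 := ihb n le_rfl
      have hGn : Φ n ≤ X * (h ^ 2 + κ ^ 2) :=
        le_trans (ihΦ n le_rfl) (hGE n (Nat.le_of_succ_le hn1))
      have hAn : a h M n ^ 2 ≤ X * (h ^ 2 + κ ^ 2) := le_trans (hΦA n) hGn
      have hanγ : a h M n ^ θ ≤ γ := by
        have ha2 : a h M n ^ 2 ≤ β := le_trans hAn hEβ
        have h1 : a h M n ≤ γ ^ (1 / θ) := by
          apply le_of_pow_le_pow_left₀ two_ne_zero (Real.rpow_nonneg hγ.le _)
          calc a h M n ^ 2 ≤ β := ha2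
            _ = (γ ^ (1 / θ)) ^ 2 := by
              rw [← Real.rpow_natCast (γ ^ (1 / θ)) 2, ← Real.rpow_mul hγ.le, hβ_def]
              congr 1
              push_cast
              ring
        calc a h M n ^ θ ≤ (γ ^ (1 / θ)) ^ θ := Real.rpow_le_rpow (ha h M n) h1 hθ.le
          _ = γ := by
            rw [← Real.rpow_mul hγ.le, one_div, inv_mul_cancel₀ (ne_of_gt hθ), Real.rpow_one]
      have hμ₃γ : μ₃ * a h M n ^ θ ≤ c / 8 := by
        have e1 : μ₃ * a h M n ^ θ ≤ μ₃ * γ := mul_le_mul_of_nonneg_left hanγ hμ₃.le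
        have e2 : μ₃ * γ ≤ μ₃ * (c / (8 * μ₃)) := mul_le_mul_of_nonneg_left hγc hμ₃.le
        have e3 : μ₃ * (c / (8 * μ₃)) = c / 8 := by
          field_simp
        linarith only [e1, e2, e3.le, e3.ge]
      have hmem : n + 1 ∈ Finset.Icc 1 M := Finset.mem_Icc.mpr ⟨Nat.le_add_left 1 n, hn1⟩
      have Hm := H2' (n + 1) (Nat.le_add_left 1 n) hn1
      rw [Nat.add_sub_cancel] at Hm
      have hb1θ : b h M n ^ (1 - θ) ≤ 1 :=
        Real.rpow_le_one (hb h M n) hbn (by linarith only [hθ1])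
      have hAκ : a h M n ^ 2 ≤ c / 8 * κ := le_trans hAn hEκ
      have hbnn : 0 ≤ b h M (n + 1) := hb h M (n + 1)
      have hyt : (0:ℝ) ≤ a h M n ^ θ := Real.rpow_nonneg (ha h M n) θ
      -- step 1 : b (n+1) ≤ 1
      have hbm : b h M (n + 1) ≤ 1 := by
        by_contra hcon
        push_neg at hcon
        have h5 := hdiss2 (n + 1) hcon.le
        have t3 : μ₃ * b h M (n + 1) * b h M n ^ (1 - θ) * a h M n ^ θ
            ≤ c / 8 * b h M (n + 1) := by
          have e1 : μ₃ * b h M (n + 1) * b h M n ^ (1 - θ) ≤ μ₃ * b h M (n + 1) := by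
            calc μ₃ * b h M (n + 1) * b h M n ^ (1 - θ) ≤ μ₃ * b h M (n + 1) * 1 :=
                mul_le_mul_of_nonneg_left hb1θ (mul_nonneg hμ₃.le hbnn)
              _ = μ₃ * b h M (n + 1) := mul_one _
          have e2 : μ₃ * b h M (n + 1) * b h M n ^ (1 - θ) * a h M n ^ θ
              ≤ μ₃ * b h M (n + 1) * a h M n ^ θ := mul_le_mul_of_nonneg_right e1 hyt
          have e4 : b h M (n + 1) * (μ₃ * a h M n ^ θ) ≤ b h M (n + 1) * (c / 8) :=
            mul_le_mul_of_nonneg_left hμ₃γ hbnn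
          nlinarith only [e2, e4]
        have t1 : b h M (n + 1) * r h M (n + 1) ≤ b h M (n + 1) * (c / 8) :=
          mul_le_mul_of_nonneg_left (hrb (n + 1) hmem) hbnn
        have t2 : b h M (n + 1) * ρ h M (n + 1) ≤ b h M (n + 1) * (c / 8) :=
          mul_le_mul_of_nonneg_left (hρb (n + 1) hmem) hbnn
        have t4 := hsb (n + 1) hmem
        have t5 := hσb (n + 1) hmem
        have hdivlb : -(c / 8) ≤ (a h M (n + 1) ^ 2 - a h M n ^ 2) / κ := by
          rw [le_div_iff₀ hκ]
          nlinarith only [hAκ, sq_nonneg (a h M (n + 1)), hκ, hc]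
        have final : c * b h M (n + 1) ≤ 3 * (c / 8) * b h M (n + 1) + 3 * (c / 8) := by
          linarith only [Hm, h5, t1, t2, t3, t4, t5, hdivlb]
        nlinarith only [final, hcon, hc]
      -- step 2 : Φ (n+1) ≤ G (n+1)
      have hdq := hdiss (n + 1) hbm
      have y1 : b h M (n + 1) * r h M (n + 1)
          ≤ c / 8 * b h M (n + 1) ^ 2 + 2 / c * r h M (n + 1) ^ 2 := by
        have hy := aux_young (b h M (n + 1)) (r h M (n + 1)) (c / 8) (by linarith only [hc])
        have e : r h M (n + 1) ^ 2 / (4 * (c / 8)) = 2 / c * r h M (n + 1) ^ 2 := by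
          rw [div_eq_iff (by linarith only [hc] : (4:ℝ) * (c / 8) ≠ 0)]
          field_simp
          ring
        linarith only [hy, e.le, e.ge]
      have y2 : b h M (n + 1) * ρ h M (n + 1)
          ≤ c / 8 * b h M (n + 1) ^ 2 + 2 / c * ρ h M (n + 1) ^ 2 := by
        have hy := aux_young (b h M (n + 1)) (ρ h M (n + 1)) (c / 8) (by linarith only [hc])
        have e : ρ h M (n + 1) ^ 2 / (4 * (c / 8)) = 2 / c * ρ h M (n + 1) ^ 2 := by
          rw [div_eq_iff (by linarith only [hc] : (4:ℝ) * (c / 8) ≠ 0)]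
          field_simp
          ring
        linarith only [hy, e.le, e.ge]
      have y3 : μ₃ * b h M (n + 1) * b h M n ^ (1 - θ) * a h M n ^ θ
          ≤ c / 8 * b h M (n + 1) ^ 2 + c / 16 * b h M n ^ 2 + K * a h M n ^ 2 := by
        have hy := aux_young (b h M (n + 1)) (μ₃ * (b h M n ^ (1 - θ) * a h M n ^ θ)) (c / 8)
          (by linarith only [hc])
        have hXt := aux_theta θ t₀ (b h M n) (a h M n) hθ hθ1 ht₀ (hb h M n) (ha h M n)
        have e2 : 2 * μ₃ ^ 2 / c * (b h M n ^ (1 - θ) * a h M n ^ θ) ^ 2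
            ≤ 2 * μ₃ ^ 2 / c * (t₀ * b h M n ^ 2 + t₀ ^ (-(1 - θ) / θ) * a h M n ^ 2) :=
          mul_le_mul_of_nonneg_left hXt (div_nonneg (by positivity) hc.le)
        have e3 : 2 * μ₃ ^ 2 / c * t₀ = c / 16 := by
          rw [ht₀_def]
          field_simp
          ring
        have e4 : 2 * μ₃ ^ 2 / c * (t₀ * b h M n ^ 2 + t₀ ^ (-(1 - θ) / θ) * a h M n ^ 2)
            = 2 * μ₃ ^ 2 / c * t₀ * b h M n ^ 2 + K * a h M n ^ 2 := by
          rw [hK_def]; ring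
        have e1 : (μ₃ * (b h M n ^ (1 - θ) * a h M n ^ θ)) ^ 2 / (4 * (c / 8))
            = 2 * μ₃ ^ 2 / c * (b h M n ^ (1 - θ) * a h M n ^ θ) ^ 2 := by
          rw [div_eq_iff (by linarith only [hc] : (4:ℝ) * (c / 8) ≠ 0)]
          field_simp
          ring
        calc μ₃ * b h M (n + 1) * b h M n ^ (1 - θ) * a h M n ^ θ
            = b h M (n + 1) * (μ₃ * (b h M n ^ (1 - θ) * a h M n ^ θ)) := by ring
          _ ≤ c / 8 * b h M (n + 1) ^ 2
              + (μ₃ * (b h M n ^ (1 - θ) * a h M n ^ θ)) ^ 2 / (4 * (c / 8)) := hy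
          _ = c / 8 * b h M (n + 1) ^ 2
              + 2 * μ₃ ^ 2 / c * (b h M n ^ (1 - θ) * a h M n ^ θ) ^ 2 := by rw [e1]
          _ ≤ c / 8 * b h M (n + 1) ^ 2 + c / 16 * b h M n ^ 2 + K * a h M n ^ 2 := by
              have e5 := e2
              rw [e4, e3] at e5
              linarith only [e5]
      have comb : (a h M (n + 1) ^ 2 - a h M n ^ 2) / κ + c * b h M (n + 1) ^ 2
          ≤ 3 * (c / 8) * b h M (n + 1) ^ 2 + c / 16 * b h M n ^ 2 + K * a h M n ^ 2
            + d (n + 1) := by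
        have hdv : d (n + 1) = 2 / c * (r h M (n + 1) ^ 2 + ρ h M (n + 1) ^ 2)
            + s h M (n + 1) ^ 2 + σ h M (n + 1) ^ 2 := by rw [hd_def]
        linarith only [Hm, hdq, y1, y2, y3, hdv.le, hdv.ge]
      have comb2 : a h M (n + 1) ^ 2 + 5 * (c / 8) * (κ * b h M (n + 1) ^ 2)
          ≤ a h M n ^ 2 + c / 16 * (κ * b h M n ^ 2) + K * κ * a h M n ^ 2
            + κ * d (n + 1) := by
        have e0 : (a h M (n + 1) ^ 2 - a h M n ^ 2) / κ * κ
            = a h M (n + 1) ^ 2 - a h M n ^ 2 := by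
          field_simp
        have e6 := mul_le_mul_of_nonneg_right comb hκ.le
        nlinarith only [e6, e0.le, e0.ge]
      have hsucc : ∑ j ∈ Finset.Icc 1 (n + 1), b h M j ^ 2
          = ∑ j ∈ Finset.Icc 1 n, b h M j ^ 2 + b h M (n + 1) ^ 2 :=
        Finset.sum_Icc_succ_top (Nat.le_add_left 1 n) _
      have hΦstep : Φ (n + 1) ≤ (1 + K * κ) * Φ n + κ * d (n + 1) := by
        rw [hΦ_def]; dsimp only
        rw [hsucc]
        have hS0 : 0 ≤ ∑ j ∈ Finset.Icc 1 n, b h M j ^ 2 :=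
          Finset.sum_nonneg fun j _ => sq_nonneg _
        have q1 : 0 ≤ c * (κ * b h M (n + 1) ^ 2) :=
          mul_nonneg hc.le (mul_nonneg hκ.le (sq_nonneg _))
        have q2 : 0 ≤ K * κ * (c * (κ * ∑ j ∈ Finset.Icc 1 n, b h M j ^ 2)) :=
          mul_nonneg (mul_nonneg hK.le hκ.le) (mul_nonneg hc.le (mul_nonneg hκ.le hS0))
        have q3 : 0 ≤ K * κ * (c * (κ * b h M n ^ 2)) :=
          mul_nonneg (mul_nonneg hK.le hκ.le) (mul_nonneg hc.le (mul_nonneg hκ.le (sq_nonneg _)))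
        nlinarith only [comb2, q1, q2, q3]
      have hΦG : Φ (n + 1) ≤ G (n + 1) := by
        have hKκ0 : (0:ℝ) ≤ K * κ := mul_nonneg hK.le hκ.le
        have hg : (1 + K * κ) * Φ n + κ * d (n + 1) ≤ (1 + K * κ) * G n + κ * d (n + 1) := by
          have e := mul_le_mul_of_nonneg_left (ihΦ n le_rfl)
            (by linarith only [hKκ0] : (0:ℝ) ≤ 1 + K * κ)
          linarith only [e]
        have hGstep : (1 + K * κ) * G n + κ * d (n + 1) ≤ G (n + 1) := by
          rw [hG_def]; dsimp only
          rw [Finset.sum_Icc_succ_top (Nat.le_add_left 1 n), pow_succ]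
          have h1 : (1:ℝ) ≤ 1 + K * κ := by linarith only [hKκ0]
          have h2 : (1:ℝ) ≤ (1 + K * κ) ^ n := one_le_pow₀ h1
          have hp1 : (1:ℝ) ≤ (1 + K * κ) ^ n * (1 + K * κ) := by nlinarith only [h1, h2]
          have hd' : 0 ≤ κ * d (n + 1) := mul_nonneg hκ.le (hd0 _)
          nlinarith only [mul_le_mul_of_nonneg_right hp1 hd']
        linarith only [hΦstep, hg, hGstep]
      refine ⟨?_, ?_⟩
      · intro k hk
        rcases eq_or_lt_of_le hk with he | hlt
        · exact he ▸ hbm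
        · exact ihb k (Nat.lt_succ_iff.mp hlt)
      · intro k hk
        rcases eq_or_lt_of_le hk with he | hlt
        · exact he ▸ hΦG
        · exact ihΦ k (Nat.lt_succ_iff.mp hlt)
  -- final assembly
  obtain ⟨kb, kΦ⟩ := key M le_rfl
  refine ⟨fun m hm => kb m hm, ?_⟩
  intro m hm
  have h1 : a h M m ^ 2 ≤ X * (h ^ 2 + κ ^ 2) :=
    le_trans (hΦA m) (le_trans (kΦ m hm) (hGE m hm))
  have h2 : c / 2 * κ * ∑ j ∈ Finset.Icc 1 M, b h M j ^ 2 ≤ X * (h ^ 2 + κ ^ 2) :=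
    le_trans (hΦS M) (le_trans (kΦ M le_rfl) (hGE M le_rfl))
  have h3 : ∑ k ∈ Finset.range (M + 1), b h M k ^ 2
      = b h M 0 ^ 2 + ∑ j ∈ Finset.Icc 1 M, b h M j ^ 2 := by
    rw [Finset.sum_range_succ']
    rw [add_comm]
    congr 1
    rw [← Finset.Ico_add_one_right_eq_Icc, Finset.sum_Ico_eq_sum_range]
    exact Finset.sum_congr (by norm_num) fun i _ => by rw [Nat.add_comm]
  have hb0κ : c * (κ * b h M 0 ^ 2) ≤ c * (μ₀ * h ^ 2) := by
    have k5 : κ * b h M 0 ^ 2 ≤ μ₀ * h ^ 2 := by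
      calc κ * b h M 0 ^ 2 ≤ 1 * (μ₀ * h ^ 2) := mul_le_mul hκle1 db (sq_nonneg _) zero_le_one
        _ = μ₀ * h ^ 2 := one_mul _
    exact mul_le_mul_of_nonneg_left k5 hc.le
  have hexp : 1 ≤ Real.exp (2 * 1 * κ * M) :=
    Real.one_le_exp (mul_nonneg (mul_nonneg (by norm_num) hκ.le) (Nat.cast_nonneg M))
  have main : a h M m ^ 2 + c * (κ * ∑ k ∈ Finset.range (M + 1), b h M k ^ 2)
      ≤ (3 * X + c * μ₀) * (h ^ 2 + κ ^ 2) := by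
    rw [h3]
    have h2' : c * (κ * ∑ j ∈ Finset.Icc 1 M, b h M j ^ 2) ≤ 2 * (X * (h ^ 2 + κ ^ 2)) := by
      linarith only [h2]
    have pκ : 0 ≤ c * μ₀ * κ ^ 2 := mul_nonneg (mul_nonneg hc.le hμ₀.le) (sq_nonneg _)
    nlinarith only [h1, h2', hb0κ, pκ]
  calc a h M m ^ 2 + c * (κ * ∑ k ∈ Finset.range (M + 1), b h M k ^ 2)
      ≤ (3 * X + c * μ₀) * (h ^ 2 + κ ^ 2) := main
    _ = (3 * X + c * μ₀) * (h ^ 2 + κ ^ 2) * 1 := (mul_one _).symm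
    _ ≤ (3 * X + c * μ₀) * (h ^ 2 + κ ^ 2) * Real.exp (2 * 1 * κ * M) := by
        apply mul_le_mul_of_nonneg_left hexp
        have e1 : 0 ≤ 3 * X + c * μ₀ := by nlinarith only [hX, mul_pos hc hμ₀]
        have e2 : (0:ℝ) ≤ h ^ 2 + κ ^ 2 := by positivity
        exact mul_nonneg e1 e2
end

section
/- Let 1 < p ≤ 2 and δ ≥ 0, and set F(P) := (δ+|P|)^{(p-2)/2}P on symmetric 3×3 matrices. Then for all symmetric P: |F(P)|² is comparable to φ(|P|) with constants depending only on p, where φ(t) := ∫₀ᵗ (δ+s)^{p-2} s ds; that is, there exist c, C > 0 depending only on p with c·φ(|P|) ≤ |F(P)|² ≤ C·φ(|P|). -/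
open scoped BigOperators

noncomputable def normF (P : Matrix (Fin 3) (Fin 3) ℝ) : ℝ :=
  Real.sqrt (∑ i, ∑ j, (P i j) ^ 2)

noncomputable def Fmap (p δ : ℝ) (P : Matrix (Fin 3) (Fin 3) ℝ) :
    Matrix (Fin 3) (Fin 3) ℝ :=
  ((δ + normF P) ^ ((p - 2) / 2)) • P

noncomputable def phiN (p δ t : ℝ) : ℝ := ∫ s in (0:ℝ)..t, (δ + s) ^ (p - 2) * s

lemma normF_nonneg (P : Matrix (Fin 3) (Fin 3) ℝ) : 0 ≤ normF P :=
  Real.sqrt_nonneg _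

lemma normF_sq (P : Matrix (Fin 3) (Fin 3) ℝ) : normF P ^ 2 = ∑ i, ∑ j, (P i j) ^ 2 :=
  Real.sq_sqrt (by positivity)

lemma normF_Fmap_sq (p δ : ℝ) (hδ : 0 ≤ δ) (P : Matrix (Fin 3) (Fin 3) ℝ) :
    normF (Fmap p δ P) ^ 2 = (δ + normF P) ^ (p - 2) * normF P ^ 2 := by
  have h0 : 0 ≤ δ + normF P := add_nonneg hδ (normF_nonneg P)
  have : normF (Fmap p δ P) ^ 2
      = ((δ + normF P) ^ ((p - 2) / 2)) ^ 2 * normF P ^ 2 := by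
    rw [normF_sq, normF_sq]
    simp [Fmap, Matrix.smul_apply, mul_pow, Finset.mul_sum]
  rw [this]
  congr 1
  rw [← Real.rpow_natCast ((δ + normF P) ^ ((p - 2) / 2)) 2, ← Real.rpow_mul h0]
  norm_num

open intervalIntegral in
lemma integrable_aux {p : ℝ} (hp : 1 < p) (hp2 : p ≤ 2) {δ t : ℝ} (hδ : 0 ≤ δ) (ht : 0 ≤ t) :
    IntervalIntegrable (fun s => (δ + s) ^ (p - 2) * s) MeasureTheory.volume 0 t := by
  have hg : IntervalIntegrable (fun s : ℝ => s ^ (p - 1)) MeasureTheory.volume 0 t :=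
    intervalIntegrable_rpow' (by linarith)
  refine hg.mono_fun ?_ ?_
  · exact (((measurable_const.add measurable_id).pow_const _).mul measurable_id).aestronglyMeasurable
  · filter_upwards [MeasureTheory.ae_restrict_mem measurableSet_uIoc] with s hs
    rw [Set.uIoc_of_le ht] at hs
    obtain ⟨hs0, hst⟩ := hs
    have h1 : (δ + s) ^ (p - 2) ≤ s ^ (p - 2) :=
      Real.rpow_le_rpow_of_nonpos hs0 (by linarith) (by linarith)
    have h2 : s ^ (p - 2) * s = s ^ (p - 1) := by
      rw [show p - 1 = (p - 2) + 1 by ring, Real.rpow_add_one hs0.ne']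
    have hL : 0 ≤ (δ + s) ^ (p - 2) := Real.rpow_nonneg (by linarith) _
    simp only [Real.norm_eq_abs]
    rw [abs_of_nonneg (mul_nonneg hL hs0.le), abs_of_nonneg (Real.rpow_nonneg hs0.le _), ← h2]
    exact mul_le_mul_of_nonneg_right h1 hs0.le

lemma phi_lower {p : ℝ} (hp : 1 < p) (hp2 : p ≤ 2) {δ t : ℝ} (hδ : 0 ≤ δ) (ht : 0 ≤ t) :
    (δ + t) ^ (p - 2) * t ^ 2 / 2 ≤ phiN p δ t := by
  have hint : IntervalIntegrable (fun s : ℝ => (δ + t) ^ (p - 2) * s)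
      MeasureTheory.volume 0 t := (continuous_const.mul continuous_id).intervalIntegrable _ _
  have h1 : (∫ s in (0:ℝ)..t, (δ + t) ^ (p - 2) * s) ≤ phiN p δ t := by
    refine intervalIntegral.integral_mono_on ht hint (integrable_aux hp hp2 hδ ht) ?_
    intro s hs
    rcases eq_or_lt_of_le hs.1 with h | h
    · simp [← h]
    · exact mul_le_mul_of_nonneg_right
        (Real.rpow_le_rpow_of_nonpos (by linarith) (by linarith [hs.2]) (by linarith)) hs.1
  calc (δ + t) ^ (p - 2) * t ^ 2 / 2
      = (δ + t) ^ (p - 2) * ((t ^ 2 - 0 ^ 2) / 2) := by ring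
    _ = ∫ s in (0:ℝ)..t, (δ + t) ^ (p - 2) * s := by
        rw [intervalIntegral.integral_const_mul, integral_id]
    _ ≤ phiN p δ t := h1

lemma two_rpow_le {p : ℝ} (hp : 1 < p) (hp2 : p ≤ 2) : (2:ℝ) ^ (2 - p) ≤ 2 := by
  calc (2:ℝ) ^ (2 - p) ≤ (2:ℝ) ^ (1:ℝ) :=
        Real.rpow_le_rpow_of_exponent_le one_le_two (by linarith)
    _ = 2 := Real.rpow_one 2

lemma phi_upper {p : ℝ} (hp : 1 < p) (hp2 : p ≤ 2) {δ t : ℝ} (hδ : 0 ≤ δ) (ht : 0 ≤ t) :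
    phiN p δ t ≤ 2 / p * ((δ + t) ^ (p - 2) * t ^ 2) := by
  rcases eq_or_lt_of_le ht with h0 | htpos
  · simp [phiN, ← h0]
  have hX : 0 ≤ (δ + t) ^ (p - 2) * t ^ 2 :=
    mul_nonneg (Real.rpow_nonneg (by linarith) _) (sq_nonneg t)
  have key : phiN p δ t ≤ 2 * ((δ + t) ^ (p - 2) * t ^ 2) / p := by
    rcases le_total δ t with hdt | htd
    · -- δ ≤ t : compare with s^(p-1)
      have h1 : phiN p δ t ≤ ∫ s in (0:ℝ)..t, s ^ (p - 1) := by
        refine intervalIntegral.integral_mono_on ht (integrable_aux hp hp2 hδ ht)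
          (intervalIntegral.intervalIntegrable_rpow' (by linarith)) ?_
        intro s hs
        rcases eq_or_lt_of_le hs.1 with h | h
        · rw [← h]; simp [Real.zero_rpow (by linarith : p - 1 ≠ 0)]
        · rw [show p - 1 = (p - 2) + 1 by ring, Real.rpow_add_one h.ne']
          exact mul_le_mul_of_nonneg_right
            (Real.rpow_le_rpow_of_nonpos h (by linarith) (by linarith)) h.le
      have h2 : (∫ s in (0:ℝ)..t, s ^ (p - 1)) = t ^ p / p := by
        rw [integral_rpow (Or.inl (by linarith))]
        rw [show p - 1 + 1 = p by ring, Real.zero_rpow (by linarith : p ≠ 0)]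
        ring
      have h3 : t ^ p ≤ 2 * ((δ + t) ^ (p - 2) * t ^ 2) := by
        have ha : (2 * t) ^ (p - 2) ≤ (δ + t) ^ (p - 2) :=
          Real.rpow_le_rpow_of_nonpos (by linarith) (by linarith) (by linarith)
        have hb : (2 * t) ^ (p - 2) = 2 ^ (p - 2) * t ^ (p - 2) :=
          Real.mul_rpow (by norm_num) ht
        have hc : t ^ (p - 2) ≤ 2 ^ (2 - p) * (δ + t) ^ (p - 2) := by
          have h2p : (0:ℝ) < (2:ℝ) ^ (p - 2) := Real.rpow_pos_of_pos two_pos _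
          have := hb ▸ ha
          rw [show (2:ℝ) ^ (2 - p) = ((2:ℝ) ^ (p - 2))⁻¹ by
            rw [← Real.rpow_neg (by norm_num)]; ring_nf]
          rw [← div_eq_inv_mul, le_div_iff₀ h2p, mul_comm]
          linarith
        have hd : t ^ p = t ^ (p - 2) * t ^ 2 := by
          rw [show p = (p - 2) + 2 by ring, Real.rpow_add htpos, ← Real.rpow_natCast t 2]
          norm_num
        calc t ^ p = t ^ (p - 2) * t ^ 2 := hd
          _ ≤ (2 ^ (2 - p) * (δ + t) ^ (p - 2)) * t ^ 2 :=
              mul_le_mul_of_nonneg_right hc (sq_nonneg t)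
          _ ≤ (2 * (δ + t) ^ (p - 2)) * t ^ 2 := by
              have := two_rpow_le hp hp2
              have hr : 0 ≤ (δ + t) ^ (p - 2) := Real.rpow_nonneg (by linarith) _
              nlinarith [sq_nonneg t]
          _ = 2 * ((δ + t) ^ (p - 2) * t ^ 2) := by ring
      calc phiN p δ t ≤ t ^ p / p := h2 ▸ h1
        _ ≤ 2 * ((δ + t) ^ (p - 2) * t ^ 2) / p := by
            apply div_le_div_of_nonneg_right h3 (by linarith) |>.trans_eq rfl
    · -- t ≤ δ
      have hδpos : 0 < δ := lt_of_lt_of_le htpos htd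
      have h1 : phiN p δ t ≤ ∫ s in (0:ℝ)..t, δ ^ (p - 2) * s := by
        refine intervalIntegral.integral_mono_on ht (integrable_aux hp hp2 hδ ht)
          ((continuous_const.mul continuous_id).intervalIntegrable _ _) ?_
        intro s hs
        exact mul_le_mul_of_nonneg_right
          (Real.rpow_le_rpow_of_nonpos hδpos (by linarith [hs.1]) (by linarith)) hs.1
      have h2 : (∫ s in (0:ℝ)..t, δ ^ (p - 2) * s) = δ ^ (p - 2) * (t ^ 2 / 2) := by
        rw [intervalIntegral.integral_const_mul, integral_id]; ring_nf
      have hc : δ ^ (p - 2) ≤ 2 ^ (2 - p) * (δ + t) ^ (p - 2) := by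
        have ha : (2 * δ) ^ (p - 2) ≤ (δ + t) ^ (p - 2) :=
          Real.rpow_le_rpow_of_nonpos (by linarith) (by linarith) (by linarith)
        have hb : (2 * δ) ^ (p - 2) = 2 ^ (p - 2) * δ ^ (p - 2) :=
          Real.mul_rpow (by norm_num) hδ
        have h2p : (0:ℝ) < (2:ℝ) ^ (p - 2) := Real.rpow_pos_of_pos two_pos _
        rw [show (2:ℝ) ^ (2 - p) = ((2:ℝ) ^ (p - 2))⁻¹ by
          rw [← Real.rpow_neg (by norm_num)]; ring_nf]
        rw [← div_eq_inv_mul, le_div_iff₀ h2p, mul_comm]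
        nlinarith
      have hr : 0 ≤ (δ + t) ^ (p - 2) := Real.rpow_nonneg (by linarith) _
      calc phiN p δ t ≤ δ ^ (p - 2) * (t ^ 2 / 2) := h2 ▸ h1
        _ ≤ (2 ^ (2 - p) * (δ + t) ^ (p - 2)) * (t ^ 2 / 2) :=
            mul_le_mul_of_nonneg_right hc (by positivity)
        _ ≤ (2 * (δ + t) ^ (p - 2)) * (t ^ 2 / 2) := by
            have := two_rpow_le hp hp2
            nlinarith [sq_nonneg t]
        _ = ((δ + t) ^ (p - 2) * t ^ 2) := by ring
        _ ≤ 2 * ((δ + t) ^ (p - 2) * t ^ 2) / p := by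
            rw [le_div_iff₀ (by linarith : (0:ℝ) < p)]
            nlinarith
  calc phiN p δ t ≤ 2 * ((δ + t) ^ (p - 2) * t ^ 2) / p := key
    _ = 2 / p * ((δ + t) ^ (p - 2) * t ^ 2) := by ring

/-- `|F(P)|² ∼ φ(|P|)` with constants depending only on `p`. -/
theorem stmt_14 (p : ℝ) (hp : 1 < p) (hp2 : p ≤ 2) :
    ∃ c C : ℝ, 0 < c ∧ 0 < C ∧
      ∀ δ : ℝ, 0 ≤ δ → ∀ P : Matrix (Fin 3) (Fin 3) ℝ, P.IsSymm →
        c * phiN p δ (normF P) ≤ (normF (Fmap p δ P)) ^ 2 ∧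
        (normF (Fmap p δ P)) ^ 2 ≤ C * phiN p δ (normF P) := by
  refine ⟨p / 2, 2, by linarith, by norm_num, fun δ hδ P _ => ?_⟩
  set t := normF P with htdef
  have ht : 0 ≤ t := normF_nonneg P
  have hF : normF (Fmap p δ P) ^ 2 = (δ + t) ^ (p - 2) * t ^ 2 := by
    rw [normF_Fmap_sq p δ hδ P]
  constructor
  · have h := phi_upper hp hp2 hδ ht
    rw [hF]
    have hp0 : (0:ℝ) < p / 2 := by linarith
    calc p / 2 * phiN p δ t ≤ p / 2 * (2 / p * ((δ + t) ^ (p - 2) * t ^ 2)) :=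
          mul_le_mul_of_nonneg_left h hp0.le
      _ = (δ + t) ^ (p - 2) * t ^ 2 := by field_simp
  · have h := phi_lower hp hp2 hδ ht
    rw [hF]
    linarith
end
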